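/- Per-node uniform prompting equals per-node independent perturbation at the readout level: for f(A, X) = 𝟙ᵀ(A + (1+ε)I)·X·Θ with D + N + Nε ≠ 0, and for any matrix ΔX ∈ ℝ^{N×F} of independent per-node feature perturbations, the single shared vector p = (𝟙ᵀ(A + (1+ε)I)·ΔX)/(D + N + Nε) ∈ ℝ^{1×F} satisfies f(A, X + 𝟙·p) = f(A, X + ΔX); thus F parameters suffice to emulate any N×F-parameter perturbation. -/

import Mathlib

/-! With M = A + (1+ε)I, the readout 𝟙ᵀ M X Θ is additive in X and sees X only through the
column sums 𝟙ᵀ M X. For a rank-one prompt 𝟙·p these are (𝟙ᵀ M 𝟙) p, and the total mass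
𝟙ᵀ M 𝟙 equals D + N + Nε; dividing 𝟙ᵀ M ΔX by it therefore yields a p with the same column
sums as ΔX. -/

open Matrix BigOperators

/-- One-layer linear GIN with sum readout: 𝟙ᵀ (A + (1+ε) I) X Θ as a row vector. -/
noncomputable def gin {n : Type*} [Fintype n] [DecidableEq n] {F Fp : ℕ}
    (ε : ℝ) (Θ : Matrix (Fin F) (Fin Fp) ℝ)
    (A : Matrix n n ℝ) (X : Matrix n (Fin F) ℝ) : Fin Fp → ℝ :=
  fun j => ∑ i, ((A + (1 + ε) • (1 : Matrix n n ℝ)) * X * Θ) i j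

/-- 𝟙·p : the matrix each of whose rows is the row vector p. -/
def prompt (n : Type*) {F : ℕ} (p : Fin F → ℝ) : Matrix n (Fin F) ℝ :=
  Matrix.of fun _ j => p j

namespace Matrix

variable {m n R : Type*} [Fintype m]

theorem one_vecMul_apply [NonAssocSemiring R] (M : Matrix m n R) (j : n) :
    (1 ᵥ* M) j = ∑ i, M i j := by
  simp [vecMul, dotProduct]

theorem sum_sum_add_smul_one [DecidableEq m] [Semiring R] (A : Matrix m m R) (c : R) :
    ∑ i, ∑ j, (A + c • (1 : Matrix m m R)) i j = ∑ i, ∑ j, A i j + Fintype.card m * c := by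
  simp [Finset.sum_add_distrib, one_apply]

end Matrix

theorem prompt_eq_vecMulVec (n : Type*) {F : ℕ} (p : Fin F → ℝ) : prompt n p = vecMulVec 1 p := by
  ext; simp [prompt, vecMulVec_apply]

variable {n : Type*} [Fintype n]

theorem one_vecMul_mul_prompt {F : ℕ} (M : Matrix n n ℝ) (p : Fin F → ℝ) :
    1 ᵥ* (M * prompt n p) = (∑ i, ∑ j, M i j) • p := by
  rw [prompt_eq_vecMulVec n, mul_vecMulVec, vecMul_vecMulVec, one_dotProduct]
  simp [mulVec, dotProduct]

variable [DecidableEq n]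

theorem gin_eq_vecMul {F Fp : ℕ} (ε : ℝ) (Θ : Matrix (Fin F) (Fin Fp) ℝ) (A : Matrix n n ℝ)
    (X : Matrix n (Fin F) ℝ) :
    gin ε Θ A X = 1 ᵥ* ((A + (1 + ε) • (1 : Matrix n n ℝ)) * X) ᵥ* Θ := by
  ext j
  rw [vecMul_vecMul, one_vecMul_apply]
  rfl

theorem gin_add_congr {F Fp : ℕ} (ε : ℝ) (Θ : Matrix (Fin F) (Fin Fp) ℝ) (A : Matrix n n ℝ)
    (X Y Z : Matrix n (Fin F) ℝ)
    (h : 1 ᵥ* ((A + (1 + ε) • (1 : Matrix n n ℝ)) * Y)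
      = 1 ᵥ* ((A + (1 + ε) • (1 : Matrix n n ℝ)) * Z)) :
    gin ε Θ A (X + Y) = gin ε Θ A (X + Z) := by
  simp only [gin_eq_vecMul, Matrix.mul_add, vecMul_add, h]

theorem stmt18 (N F Fp : ℕ) (A : Matrix (Fin N) (Fin N) ℝ)
    (X ΔX : Matrix (Fin N) (Fin F) ℝ) (ε : ℝ) (Θ : Matrix (Fin F) (Fin Fp) ℝ)
    (hD : (∑ i, ∑ j, A i j) + N + N * ε ≠ 0)
    (p : Fin F → ℝ)
    (hp : p = fun j =>
      (∑ i, ((A + (1 + ε) • (1 : Matrix (Fin N) (Fin N) ℝ)) * ΔX) i j)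
        / ((∑ i, ∑ j, A i j) + N + N * ε)) :
    gin ε Θ A (X + prompt (Fin N) p) = gin ε Θ A (X + ΔX) := by
  have hmass : ∑ i, ∑ j, (A + (1 + ε) • (1 : Matrix (Fin N) (Fin N) ℝ)) i j
      = (∑ i, ∑ j, A i j) + N + N * ε := by
    rw [sum_sum_add_smul_one, Fintype.card_fin]
    ring
  apply gin_add_congr
  ext j
  rw [one_vecMul_mul_prompt, hmass, hp, Pi.smul_apply, smul_eq_mul, one_vecMul_apply,
    mul_div_cancel₀ _ hD]
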